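/- Let K be a number field, R = 𝓞_K its ring of integers, M₀ a finitely generated R-module with torsion submodule T, ι a finite type, and v : ι → M₀ a realization. Let M₀' = M₀ / T with induced realization v' = π ∘ v, where π : M₀ → M₀/T is the quotient map. Then, as polynomials in ℤ[t], T̃_{(M₀,v)}(t,1) = |T| · T̃_{(M₀', v')}(t,1). -/
import Mathlib

open scoped TensorProduct
open NumberField

/-- The rank of a finite subset `A` of the ground set: the dimension over `K` of the
`K`-span of the images of `v i` (`i ∈ A`) in `M ⊗[𝓞 K] K`. -/
noncomputable def rkFun (K : Type) [Field K] [NumberField K]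
    {ι M : Type} [AddCommGroup M] [Module (𝓞 K) M]
    (v : ι → M) (A : Finset ι) : ℕ :=
  Module.finrank K
    (Submodule.span K ((fun i => (1 : K) ⊗ₜ[𝓞 K] v i) '' (A : Set ι)))

/-- The multiplicity `m(A)`: the cardinality of the torsion submodule of
`M(A) = M ⧸ span (𝓞 K) (v '' A)`. -/
noncomputable def mFun (K : Type) [Field K] [NumberField K]
    {ι M : Type} [AddCommGroup M] [Module (𝓞 K) M]
    (v : ι → M) (A : Finset ι) : ℕ :=
  Nat.card (Submodule.torsion (𝓞 K) (M ⧸ Submodule.span (𝓞 K) (v '' (A : Set ι))))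

/-- The evaluated Tutte polynomial
`T̃(x,y) = Σ_{A ⊆ ι} m(A) (x-1)^(r - rk A) (y-1)^(|A| - rk A) ∈ ℤ[x,y]`,
realized as a multivariate polynomial in the two variables `X 0 = x`, `X 1 = y`. -/
noncomputable def tuttePoly (K : Type) [Field K] [NumberField K]
    {ι M : Type} [Fintype ι] [AddCommGroup M] [Module (𝓞 K) M]
    (v : ι → M) : MvPolynomial (Fin 2) ℤ :=
  ∑ A : Finset ι,
    (mFun K v A : MvPolynomial (Fin 2) ℤ) *
      (MvPolynomial.X 0 - 1) ^ (rkFun K v Finset.univ - rkFun K v A) *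
      (MvPolynomial.X 1 - 1) ^ (A.card - rkFun K v A)

section Aux

variable (K : Type) [Field K] [NumberField K]

lemma subsingleton_tensor_of_torsion {N : Type} [AddCommGroup N] [Module (𝓞 K) N]
    (h : ∀ x : N, x ∈ Submodule.torsion (𝓞 K) N) :
    Subsingleton (K ⊗[𝓞 K] N) := by
  have hz : ∀ x : K ⊗[𝓞 K] N, x = 0 := by
    intro x
    induction x using TensorProduct.induction_on with
    | zero => rfl
    | tmul k t =>
      obtain ⟨r, hr⟩ := (Submodule.mem_torsion_iff (R := 𝓞 K) t).mp (h t)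
      have ha : (algebraMap (𝓞 K) K (r : 𝓞 K)) ≠ 0 :=
        (IsLocalization.map_units K r).ne_zero
      have hk : k = (r : 𝓞 K) • ((algebraMap (𝓞 K) K (r : 𝓞 K))⁻¹ * k) := by
        rw [Algebra.smul_def, ← mul_assoc, mul_inv_cancel₀ ha, one_mul]
      rw [hk, TensorProduct.smul_tmul]
      have hrt : (r : 𝓞 K) • t = 0 := hr
      rw [hrt, TensorProduct.tmul_zero]
    | add x y hx hy => rw [hx, hy, add_zero]
  exact ⟨fun a b => by rw [hz a, hz b]⟩

variable {M₀ : Type} [AddCommGroup M₀] [Module (𝓞 K) M₀]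

lemma baseChange_mkQ_injective :
    Function.Injective
      (LinearMap.baseChange K (Submodule.torsion (𝓞 K) M₀).mkQ) := by
  set T := Submodule.torsion (𝓞 K) M₀
  have hsub : Subsingleton (K ⊗[𝓞 K] ↥T) := by
    refine subsingleton_tensor_of_torsion K (fun x => ?_)
    obtain ⟨r, hr⟩ := (Submodule.mem_torsion_iff (R := 𝓞 K) (x : M₀)).mp x.2
    exact (Submodule.mem_torsion_iff (R := 𝓞 K) x).mpr ⟨r, Subtype.ext hr⟩
  have hker : LinearMap.ker (LinearMap.lTensor K T.mkQ) = ⊥ := by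
    rw [lTensor_mkQ]
    rw [LinearMap.range_eq_bot]
    exact Subsingleton.elim _ _
  have hco : ∀ z : K ⊗[𝓞 K] M₀,
      LinearMap.baseChange K T.mkQ z = LinearMap.lTensor K T.mkQ z := fun z => rfl
  intro a b hab
  have h2 : LinearMap.lTensor K T.mkQ a = LinearMap.lTensor K T.mkQ b := by
    rw [← hco, ← hco]; exact hab
  exact LinearMap.ker_eq_bot.mp hker h2

variable {ι : Type} (v : ι → M₀)

lemma rkFun_quot (A : Finset ι) :
    rkFun K (fun j : ι =>
      (Submodule.Quotient.mk (v j) : M₀ ⧸ Submodule.torsion (𝓞 K) M₀)) A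
      = rkFun K v A := by
  set T := Submodule.torsion (𝓞 K) M₀
  set φ := LinearMap.baseChange K T.mkQ
  have himg : ((fun i => (1 : K) ⊗ₜ[𝓞 K] (Submodule.Quotient.mk (v i) : M₀ ⧸ T)) '' (A : Set ι))
      = φ '' ((fun i => (1 : K) ⊗ₜ[𝓞 K] v i) '' (A : Set ι)) := by
    rw [← Set.image_comp]
    exact Set.image_congr (fun i _ => by simp [φ, LinearMap.baseChange_tmul])
  unfold rkFun
  rw [himg, ← Submodule.map_span]
  exact (LinearEquiv.finrank_eq
    (Submodule.equivMapOfInjective φ (baseChange_mkQ_injective K) _)).symm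

lemma rkFun_le_card (A : Finset ι) : rkFun K v A ≤ A.card := by
  classical
  have h1 : ((fun i => (1 : K) ⊗ₜ[𝓞 K] v i) '' (A : Set ι))
      = ↑(A.image (fun i => (1 : K) ⊗ₜ[𝓞 K] v i)) := (Finset.coe_image).symm
  rw [rkFun, h1]
  have h2 := finrank_span_finset_le_card (R := K) (A.image (fun i => (1 : K) ⊗ₜ[𝓞 K] v i))
  rw [Set.finrank] at h2
  exact le_trans h2 Finset.card_image_le

lemma mFun_quot (A : Finset ι) (hA : rkFun K v A = A.card) :
    mFun K v A
      = Nat.card (Submodule.torsion (𝓞 K) M₀) *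
        mFun K (fun j : ι =>
          (Submodule.Quotient.mk (v j) : M₀ ⧸ Submodule.torsion (𝓞 K) M₀)) A := by
  classical
  set T := Submodule.torsion (𝓞 K) M₀ with hT
  set S := Submodule.span (𝓞 K) (v '' (A : Set ι)) with hS
  set S' := Submodule.span (𝓞 K) ((fun j : ι =>
      (Submodule.Quotient.mk (v j) : M₀ ⧸ T)) '' (A : Set ι)) with hS'
  have hli : LinearIndependent K (fun i : (A : Set ι) => (1 : K) ⊗ₜ[𝓞 K] v (i : ι)) := by
    rw [linearIndependent_iff_card_eq_finrank_span]
    have him : ((fun i => (1 : K) ⊗ₜ[𝓞 K] v i) '' (A : Set ι))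
        = Set.range (fun i : (A : Set ι) => (1 : K) ⊗ₜ[𝓞 K] v (i : ι)) :=
      Set.image_eq_range _ _
    have hcard : Fintype.card (A : Set ι) = A.card := by simp
    rw [← him, hcard, ← hA]
    rfl
  have hTS : T ⊓ S = ⊥ := by
    rw [eq_bot_iff]
    rintro x ⟨hxT, hxS⟩
    rw [Submodule.mem_bot]
    have hxS2 : x ∈ Submodule.span (𝓞 K) (Set.range (fun i : (A : Set ι) => v (i : ι))) := by
      rw [← Set.image_eq_range]
      exact hxS
    obtain ⟨c, hc⟩ := (Submodule.mem_span_range_iff_exists_fun (𝓞 K)).mp hxS2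
    obtain ⟨r, hr⟩ := (Submodule.mem_torsion_iff (R := 𝓞 K) x).mp hxT
    have hr' : (r : 𝓞 K) • x = 0 := hr
    have h0 : ∑ i : (A : Set ι), algebraMap (𝓞 K) K ((r : 𝓞 K) * c i) • ((1 : K) ⊗ₜ[𝓞 K] v (i : ι))
        = (0 : K ⊗[𝓞 K] M₀) := by
      have hz0 : ((1 : K) ⊗ₜ[𝓞 K] ((r : 𝓞 K) • x) : K ⊗[𝓞 K] M₀) = 0 := by
        rw [hr', TensorProduct.tmul_zero]
      calc ∑ i : (A : Set ι), algebraMap (𝓞 K) K ((r : 𝓞 K) * c i) • ((1 : K) ⊗ₜ[𝓞 K] v (i : ι))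
          = ∑ i : (A : Set ι), (1 : K) ⊗ₜ[𝓞 K] (((r : 𝓞 K) * c i) • v (i : ι)) := by
            refine Finset.sum_congr rfl (fun i _ => ?_)
            rw [algebraMap_smul, TensorProduct.tmul_smul]
        _ = (1 : K) ⊗ₜ[𝓞 K] (∑ i : (A : Set ι), ((r : 𝓞 K) * c i) • v (i : ι)) := by
            rw [TensorProduct.tmul_sum]
        _ = (1 : K) ⊗ₜ[𝓞 K] ((r : 𝓞 K) • x) := by
            rw [← hc, Finset.smul_sum]
            congr 1
            exact Finset.sum_congr rfl (fun i _ => (mul_smul _ _ _))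
        _ = 0 := hz0
    have hz := Fintype.linearIndependent_iff.mp hli
      (fun i => algebraMap (𝓞 K) K ((r : 𝓞 K) * c i)) h0
    have hc0 : ∀ i, c i = 0 := by
      intro i
      have h1 : (r : 𝓞 K) * c i = 0 :=
        (map_eq_zero_iff _ (IsFractionRing.injective (𝓞 K) K)).mp (hz i)
      have hrne : (r : 𝓞 K) ≠ 0 := nonZeroDivisors.coe_ne_zero r
      exact (mul_eq_zero.mp h1).resolve_left hrne
    rw [← hc]
    simp [hc0]
  have hle : S ≤ LinearMap.ker (S'.mkQ ∘ₗ T.mkQ) := by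
    rw [hS, Submodule.span_le]
    rintro _ ⟨i, hi, rfl⟩
    simp only [SetLike.mem_coe, LinearMap.mem_ker, LinearMap.comp_apply,
      Submodule.mkQ_apply, Submodule.Quotient.mk_eq_zero]
    exact Submodule.subset_span ⟨i, hi, rfl⟩
  set g : (M₀ ⧸ S) →ₗ[𝓞 K] (M₀ ⧸ T) ⧸ S' := S.liftQ (S'.mkQ ∘ₗ T.mkQ) hle with hg
  have hgs : Function.Surjective g := by
    intro y
    obtain ⟨z, rfl⟩ := S'.mkQ_surjective y
    obtain ⟨x, rfl⟩ := T.mkQ_surjective z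
    exact ⟨S.mkQ x, rfl⟩
  have hkerg : LinearMap.ker g = Submodule.map S.mkQ T := by
    rw [hg, Submodule.ker_liftQ]
    have hker2 : LinearMap.ker (S'.mkQ ∘ₗ T.mkQ) = T ⊔ S := by
      rw [LinearMap.ker_comp, Submodule.ker_mkQ]
      have hS'2 : S' = Submodule.map T.mkQ S := by
        rw [hS', hS, Submodule.map_span, ← Set.image_comp]
        rfl
      rw [hS'2, Submodule.comap_map_mkQ]
    rw [hker2, Submodule.map_sup]
    have hmS : Submodule.map S.mkQ S = ⊥ := by
      rw [eq_bot_iff]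
      rintro _ ⟨x, hx, rfl⟩
      simp only [Submodule.mem_bot, Submodule.mkQ_apply, Submodule.Quotient.mk_eq_zero]
      exact hx
    rw [hmS, sup_bot_eq]
  have hmapT_tors : Submodule.map S.mkQ T ≤ Submodule.torsion (𝓞 K) (M₀ ⧸ S) := by
    rintro _ ⟨t, ht, rfl⟩
    obtain ⟨r, hr⟩ := (Submodule.mem_torsion_iff (R := 𝓞 K) t).mp ht
    refine (Submodule.mem_torsion_iff (R := 𝓞 K) _).mpr ⟨r, ?_⟩
    have hr' : (r : 𝓞 K) • t = 0 := hr
    show (r : 𝓞 K) • S.mkQ t = 0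
    rw [← map_smul, hr', map_zero]
  set P := Submodule.torsion (𝓞 K) (M₀ ⧸ S) with hP
  have hgP : ∀ x ∈ P, g x ∈ Submodule.torsion (𝓞 K) ((M₀ ⧸ T) ⧸ S') := by
    intro x hx
    obtain ⟨r, hr⟩ := (Submodule.mem_torsion_iff (R := 𝓞 K) x).mp hx
    refine (Submodule.mem_torsion_iff (R := 𝓞 K) _).mpr ⟨r, ?_⟩
    have hr' : (r : 𝓞 K) • x = 0 := hr
    show (r : 𝓞 K) • g x = 0
    rw [← map_smul, hr', map_zero]
  set gP := g.restrict hgP with hgPdef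
  have hgPs : Function.Surjective gP := by
    rintro ⟨y, hy⟩
    obtain ⟨r, hr⟩ := (Submodule.mem_torsion_iff (R := 𝓞 K) y).mp hy
    have hr' : (r : 𝓞 K) • y = 0 := hr
    obtain ⟨x, hx⟩ := hgs y
    have hrx : (r : 𝓞 K) • x ∈ LinearMap.ker g := by
      rw [LinearMap.mem_ker, map_smul, hx]
      exact hr'
    rw [hkerg] at hrx
    obtain ⟨r', hr'2⟩ := (Submodule.mem_torsion_iff (R := 𝓞 K) _).mp (hmapT_tors hrx)
    have hr'3 : (r' : 𝓞 K) • ((r : 𝓞 K) • x) = 0 := hr'2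
    have hxP : x ∈ P := (Submodule.mem_torsion_iff (R := 𝓞 K) x).mpr
      ⟨r' * r, by show ((r' * r : _) : 𝓞 K) • x = 0; rw [Submonoid.coe_mul, mul_smul]; exact hr'3⟩
    exact ⟨⟨x, hxP⟩, Subtype.ext (by simpa [hgPdef, LinearMap.restrict_apply] using hx)⟩
  have hkergP : Submodule.map P.subtype (LinearMap.ker gP) = Submodule.map S.mkQ T := by
    ext z
    constructor
    · rintro ⟨⟨x, hxP⟩, hxk, rfl⟩
      have hgx : g x = 0 := by
        have := congrArg Subtype.val (LinearMap.mem_ker.mp hxk)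
        simpa [hgPdef, LinearMap.restrict_apply] using this
      rw [← hkerg]
      exact LinearMap.mem_ker.mpr hgx
    · intro hz
      have hzP : z ∈ P := hmapT_tors hz
      refine ⟨⟨z, hzP⟩, ?_, rfl⟩
      have hgz : g z = 0 := by
        rw [← LinearMap.mem_ker, hkerg]; exact hz
      exact LinearMap.mem_ker.mpr
        (Subtype.ext (by simpa [hgPdef, LinearMap.restrict_apply] using hgz))
  have e1 : Nat.card P = Nat.card (LinearMap.ker gP) * Nat.card (P ⧸ LinearMap.ker gP) :=
    Submodule.card_eq_card_quotient_mul_card _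
  have e2 : Nat.card (P ⧸ LinearMap.ker gP)
      = Nat.card (Submodule.torsion (𝓞 K) ((M₀ ⧸ T) ⧸ S')) :=
    Nat.card_congr (LinearMap.quotKerEquivOfSurjective gP hgPs).toEquiv
  have e3 : Nat.card (LinearMap.ker gP) = Nat.card (Submodule.map S.mkQ T) := by
    rw [← hkergP]
    exact Nat.card_congr
      (Submodule.equivMapOfInjective P.subtype (Submodule.injective_subtype P) _).toEquiv
  have e4 : Nat.card (Submodule.map S.mkQ T) = Nat.card T := by
    have hinj : Function.Injective (S.mkQ ∘ₗ T.subtype) := by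
      rw [← LinearMap.ker_eq_bot, LinearMap.ker_comp, Submodule.ker_mkQ]
      rw [eq_bot_iff]
      rintro ⟨x, hxT⟩ hx
      have hx' : x ∈ T ⊓ S := ⟨hxT, hx⟩
      rw [hTS] at hx'
      exact Subtype.ext (by simpa using hx')
    have heq := Nat.card_congr (LinearEquiv.ofInjective _ hinj).toEquiv
    rw [heq]
    congr 1
    rw [LinearMap.range_comp, Submodule.range_subtype]
  calc mFun K v A = Nat.card P := rfl
    _ = Nat.card (LinearMap.ker gP) * Nat.card (P ⧸ LinearMap.ker gP) := e1
    _ = Nat.card T * Nat.card (Submodule.torsion (𝓞 K) ((M₀ ⧸ T) ⧸ S')) := by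
        rw [e2, e3, e4]
    _ = _ := rfl

end Aux

/-- with `T` the torsion submodule of `M₀`, `M₀' = M₀ ⧸ T` and `v' = π ∘ v`,
the specializations at `y = 1` satisfy `T̃_{(M₀,v)}(t,1) = |T| · T̃_{(M₀',v')}(t,1)`. -/
theorem tuttePoly_at_one_eq_card_torsion_mul
    (K : Type) [Field K] [NumberField K]
    (ι : Type) [Fintype ι]
    (M₀ : Type) [AddCommGroup M₀] [Module (𝓞 K) M₀] [Module.Finite (𝓞 K) M₀]
    (v : ι → M₀) :
    MvPolynomial.aeval ![(Polynomial.X : Polynomial ℤ), 1] (tuttePoly K v) =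
      (Nat.card (Submodule.torsion (𝓞 K) M₀) : Polynomial ℤ) *
        MvPolynomial.aeval ![(Polynomial.X : Polynomial ℤ), 1]
          (tuttePoly K (fun j : ι =>
            (Submodule.Quotient.mk (v j) : M₀ ⧸ Submodule.torsion (𝓞 K) M₀))) := by
  classical
  set v' := fun j : ι => (Submodule.Quotient.mk (v j) : M₀ ⧸ Submodule.torsion (𝓞 K) M₀) with hv'
  unfold tuttePoly
  rw [map_sum, map_sum, Finset.mul_sum]
  refine Finset.sum_congr rfl (fun A _ => ?_)
  simp only [map_mul, map_pow, map_natCast, map_sub, map_one, MvPolynomial.aeval_X,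
    Matrix.cons_val_zero, Matrix.cons_val_one, Matrix.head_cons, sub_self]
  rw [rkFun_quot K v A, rkFun_quot K v Finset.univ]
  by_cases h : A.card - rkFun K v A = 0
  · have hAcard : rkFun K v A = A.card :=
      le_antisymm (rkFun_le_card K v A) (Nat.le_of_sub_eq_zero h)
    rw [h, pow_zero, mul_one, mul_one, mFun_quot K v A hAcard]
    push_cast
    ring
  · rw [zero_pow h, mul_zero, mul_zero, mul_zero]
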